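/- Let p be stable of degree (n,m). The set {z^i w^j p̃ : i,j ≥ 0} is an orthonormal basis (in L²(dσ/|p|²)) of the orthogonal complement of H = closed span{z^i w^j : (0,0) ≤ (i,j) ≱ (n,m)} inside the closed span of {z^i w^j : i,j ≥ 0}. -/

import Mathlib

open Complex MeasureTheory Finset
open scoped ComplexInnerProductSpace

noncomputable section

/-- Evaluation of a bivariate polynomial with coefficient array `c i j`,
supported on `0 ≤ i ≤ n`, `0 ≤ j ≤ m`. -/
def evalP (n m : ℕ) (c : ℕ → ℕ → ℂ) (z w : ℂ) : ℂ :=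
  ∑ i ∈ Finset.range (n + 1), ∑ j ∈ Finset.range (m + 1), c i j * z ^ i * w ^ j

/-- `p` is stable: nonvanishing on the closed bidisk. -/
def Stable (n m : ℕ) (c : ℕ → ℕ → ℂ) : Prop :=
  ∀ z w : ℂ, ‖z‖ ≤ 1 → ‖w‖ ≤ 1 → evalP n m c z w ≠ 0

/-- `p` has degree exactly `n` in `z` and `m` in `w`. -/
def DegreeNM (n m : ℕ) (c : ℕ → ℕ → ℂ) : Prop :=
  (∃ j, c n j ≠ 0) ∧ (∃ i, c i m ≠ 0)

/-- Coefficients of the reflected polynomial `p̃(z,w) = zⁿ wᵐ conj (p (1/z̄, 1/w̄))`. -/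
def reflC (n m : ℕ) (c : ℕ → ℕ → ℂ) : ℕ → ℕ → ℂ :=
  fun i j => star (c (n - i) (m - j))

/-- The Laurent monomial `z^i w^j` as a function on the torus, `z = e^{iθ}`, `w = e^{iφ}`. -/
def tmono (i j : ℤ) : ℝ → ℝ → ℂ :=
  fun θ φ => Complex.exp (((i : ℂ) * (θ : ℂ) + (j : ℂ) * (φ : ℂ)) * Complex.I)

/-- A bivariate polynomial as a function on the torus. -/
def onT (n m : ℕ) (c : ℕ → ℕ → ℂ) : ℝ → ℝ → ℂ :=
  fun θ φ => evalP n m c (Complex.exp ((θ : ℂ) * Complex.I)) (Complex.exp ((φ : ℂ) * Complex.I))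

/-- The inner product `⟨f,g⟩ = ∫_{𝕋²} f ḡ dσ/|p|²` of `L²(dσ/|p|²)`. -/
def ip (n m : ℕ) (c : ℕ → ℕ → ℂ) (f g : ℝ → ℝ → ℂ) : ℂ :=
  (1 / (2 * Real.pi) ^ 2 : ℂ) *
    ∫ θ in (0 : ℝ)..(2 * Real.pi), ∫ φ in (0 : ℝ)..(2 * Real.pi),
      f θ φ * star (g θ φ) / ((Complex.normSq (onT n m c θ φ) : ℝ) : ℂ)

/-- Numerator of the Christoffel–Darboux-type kernel `L`:
`zⁿ (p(z,w) conj(p(1/z̄,η)) − p̃(z,w) conj(p̃(1/z̄,η)))`. -/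
def Lnum (n m : ℕ) (c : ℕ → ℕ → ℂ) (z w η : ℂ) : ℂ :=
  z ^ n * (evalP n m c z w * star (evalP n m c (star z)⁻¹ η)
    - evalP n m (reflC n m c) z w * star (evalP n m (reflC n m c) (star z)⁻¹ η))

/-- The kernel built from coefficient arrays `a k` for the polynomials `a_k(z,w)`:
`L(z,w;η) = Σ_{k<m} a_k(z,w) η̄^k`. -/
def Lsum (n m : ℕ) (a : ℕ → ℕ → ℕ → ℂ) (z w η : ℂ) : ℂ :=
  ∑ k ∈ Finset.range m, evalP (2 * n) (m - 1) (a k) z w * (star η) ^ k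

/-- `a` is the coefficient array of the kernel `L` associated with `p`:
`(1 - w η̄) L(z,w;η) = Lnum(z,w;η)` for all `z ≠ 0`. -/
def IsLCoeff (n m : ℕ) (c : ℕ → ℕ → ℂ) (a : ℕ → ℕ → ℕ → ℂ) : Prop :=
  ∀ z w η : ℂ, z ≠ 0 → (1 - w * star η) * Lsum n m a z w η = Lnum n m c z w η

/-- The measure `dμ = dσ/|p|²` on the torus, realized on the parameter square
`[0,2π]²` with normalized Lebesgue measure. -/
def muT (n m : ℕ) (c : ℕ → ℕ → ℂ) : Measure (ℝ × ℝ) :=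
  ((volume : Measure (ℝ × ℝ)).restrict
      (Set.Icc 0 (2 * Real.pi) ×ˢ Set.Icc 0 (2 * Real.pi))).withDensity
    fun x => ENNReal.ofReal
      (1 / ((2 * Real.pi) ^ 2 * Complex.normSq (onT n m c x.1 x.2)))

end

/-!
On the torus `p̃ = zⁿ wᵐ p̄`, so `|p̃| = |p|` and `⟨z^i w^j p̃, z^k w^l p̃⟩ = ∫ z^(i-k) w^(j-l) dσ`,
which makes the family orthonormal. For `k < n` or `l < m`,
`⟨z^i w^j p̃, z^k w^l⟩ = ∫ z^(i+n-k) w^(j+m-l) / p dσ` has a positive exponent in one variable, and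
vanishes by Cauchy's theorem in that variable because `1/p` is holomorphic on the closed bidisk.
Finally `z^i w^j p̃ = conj (p(0,0)) z^(i+n) w^(j+m) +` monomials of lower total degree, with
`p(0,0) ≠ 0` by stability, so by induction every monomial lies in
`span {z^i w^j p̃} + span {z^k w^l : (k,l) ≱ (n,m)}`, and a Hilbert-space argument
identifies the closed span of the family with the orthogonal complement.
-/

namespace Submodule

variable {𝕜 E : Type*} [RCLike 𝕜] [NormedAddCommGroup E] [InnerProductSpace 𝕜 E] [CompleteSpace E]

theorem topologicalClosure_eq_inf_orthogonal_of_isOrtho {A B C : Submodule 𝕜 E} (hAC : A ≤ C)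
    (hAB : A ⟂ B) (hC : C ≤ (A ⊔ B).topologicalClosure) :
    A.topologicalClosure = C.topologicalClosure ⊓ B.topologicalClosureᗮ := by
  set W := (A ⊔ B).topologicalClosure
  rw [orthogonal_closure]
  have hAbar : A.topologicalClosure ≤ Bᗮ :=
    topologicalClosure_minimal _ hAB B.isClosed_orthogonal
  have hW : W ⊓ Bᗮ = A.topologicalClosure := by
    have hdisj : A.topologicalClosureᗮ ⊓ (W ⊓ Bᗮ) = ⊥ := by
      rw [orthogonal_closure, inf_left_comm, inf_orthogonal, ← orthogonal_closure,
        inf_orthogonal_eq_bot]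
    have h := sup_orthogonal_inf_of_hasOrthogonalProjection
      (le_inf (topologicalClosure_mono le_sup_left) hAbar : A.topologicalClosure ≤ W ⊓ Bᗮ)
    rwa [hdisj, sup_bot_eq, eq_comm] at h
  refine le_antisymm (le_inf (topologicalClosure_mono hAC) hAbar) ?_
  rw [← hW]
  exact inf_le_inf_right _ (topologicalClosure_minimal _ hC (isClosed_topologicalClosure _))

end Submodule

theorem mem_span_sup_span_of_triangular {K E : Type*} [Field K] [AddCommGroup E] [Module K E]
    {n m : ℕ} (r : ℕ → ℕ → K) (hr : r n m ≠ 0) (M b : ℕ → ℕ → E)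
    (hb : ∀ i j, b i j = ∑ p ∈ range (n + 1) ×ˢ range (m + 1), r p.1 p.2 • M (i + p.1) (j + p.2))
    (i j : ℕ) :
    M i j ∈ Submodule.span K (Set.range fun q : ℕ × ℕ => b q.1 q.2)
      ⊔ Submodule.span K {f | ∃ i j : ℕ, (i < n ∨ j < m) ∧ f = M i j} := by
  induction hk : i + j using Nat.strong_induction_on generalizing i j with
  | _ k ih =>
    by_cases hlow : i < n ∨ j < m
    · exact Submodule.mem_sup_right (Submodule.subset_span ⟨i, j, hlow, rfl⟩)
    obtain ⟨i, rfl⟩ := Nat.exists_eq_add_of_le' (not_lt.mp (not_or.mp hlow).1)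
    obtain ⟨j, rfl⟩ := Nat.exists_eq_add_of_le' (not_lt.mp (not_or.mp hlow).2)
    have hnm : (n, m) ∈ range (n + 1) ×ˢ range (m + 1) := by simp
    have hlead := hb i j
    rw [← add_sum_erase _ _ hnm] at hlead
    rw [← inv_smul_smul₀ hr (M _ _), eq_sub_of_add_eq hlead.symm]
    refine Submodule.smul_mem _ _ (Submodule.sub_mem _
      (Submodule.mem_sup_left (Submodule.subset_span ⟨(i, j), rfl⟩))
      (Submodule.sum_mem _ fun p hp => Submodule.smul_mem _ _ (ih _ ?_ _ _ rfl)))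
    obtain ⟨hp, hpr⟩ := mem_erase.mp hp
    simp only [mem_product, mem_range] at hpr
    have hne : p.1 ≠ n ∨ p.2 ≠ m := by
      by_contra! h
      exact hp (Prod.ext h.1 h.2)
    omega

theorem MeasureTheory.Lp.eq_sum_smul_of_ae_eq {α ι : Type*} [MeasurableSpace α] {μ : Measure α}
    {s : Finset ι} {f : Lp ℂ 2 μ} {g : ι → Lp ℂ 2 μ} {G : ι → α → ℂ} (r : ι → ℂ)
    (hg : ∀ i, ⇑(g i) =ᵐ[μ] G i) (hf : ⇑f =ᵐ[μ] fun x => ∑ i ∈ s, r i * G i x) :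
    f = ∑ i ∈ s, r i • g i := by
  refine Lp.ext ?_
  have hsmul : ∀ᵐ x ∂μ, ∀ i ∈ s, (r i • g i) x = r i * G i x :=
    s.eventually_all.mpr fun i _ => by
      filter_upwards [Lp.coeFn_smul (r i) (g i), hg i] with x hx hgx
      rw [hx, Pi.smul_apply, hgx, smul_eq_mul]
  filter_upwards [hf, Lp.coeFn_fun_finsetSum s fun i => r i • g i, hsmul] with x hfx hsum hsx
  rw [hfx, hsum]
  exact (sum_congr rfl hsx).symm

theorem star_exp_ofReal_mul_I (θ : ℝ) : star (exp (θ * I)) = (exp (θ * I))⁻¹ := by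
  rw [star_def, ← exp_conj, ← exp_neg, map_mul, conj_ofReal, conj_I, mul_neg]

theorem tmono_eq_zpow (i j : ℤ) (θ φ : ℝ) :
    tmono i j θ φ = exp (θ * I) ^ i * exp (φ * I) ^ j := by
  rw [tmono, ← exp_int_mul, ← exp_int_mul, ← exp_add]
  ring_nf

theorem tmono_mul_tmono (i j k l : ℤ) (θ φ : ℝ) :
    tmono i j θ φ * tmono k l θ φ = tmono (i + k) (j + l) θ φ := by
  simp only [tmono, ← exp_add]
  push_cast
  ring_nf

theorem star_tmono (i j : ℤ) (θ φ : ℝ) : star (tmono i j θ φ) = tmono (-i) (-j) θ φ := by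
  rw [tmono, tmono, star_def, ← exp_conj]
  simp only [map_mul, map_add, conj_ofReal, conj_I, map_intCast]
  push_cast
  ring_nf

theorem continuous_tmono (i j : ℤ) : Continuous fun x : ℝ × ℝ => tmono i j x.1 x.2 := by
  unfold tmono
  fun_prop

theorem differentiable_evalP_left (n m : ℕ) (c : ℕ → ℕ → ℂ) (w : ℂ) :
    Differentiable ℂ fun z => evalP n m c z w := by
  unfold evalP
  fun_prop

theorem differentiable_evalP_right (n m : ℕ) (c : ℕ → ℕ → ℂ) (z : ℂ) :
    Differentiable ℂ fun w => evalP n m c z w := by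
  unfold evalP
  fun_prop

theorem evalP_zero_zero (n m : ℕ) (c : ℕ → ℕ → ℂ) : evalP n m c 0 0 = c 0 0 := by
  simp [evalP, zero_pow_eq]

theorem continuous_onT (n m : ℕ) (c : ℕ → ℕ → ℂ) :
    Continuous fun x : ℝ × ℝ => onT n m c x.1 x.2 := by
  unfold onT evalP
  fun_prop

theorem onT_ne_zero {n m : ℕ} {c : ℕ → ℕ → ℂ} (hs : Stable n m c) (θ φ : ℝ) : onT n m c θ φ ≠ 0 :=
  hs _ _ (norm_exp_ofReal_mul_I θ).le (norm_exp_ofReal_mul_I φ).le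

theorem evalP_reflC (n m : ℕ) (c : ℕ → ℕ → ℂ) {z w : ℂ} (hz : z ≠ 0) (hw : w ≠ 0) :
    evalP n m (reflC n m c) z w = z ^ n * w ^ m * star (evalP n m c (star z)⁻¹ (star w)⁻¹) := by
  simp only [evalP, reflC, star_sum, star_mul', star_pow, star_inv₀, star_star, mul_sum]
  rw [← sum_range_reflect]
  refine sum_congr rfl fun i hi => ?_
  rw [← sum_range_reflect]
  refine sum_congr rfl fun j hj => ?_
  have hi : i ≤ n := Nat.lt_succ_iff.mp (mem_range.mp hi)
  have hj : j ≤ m := Nat.lt_succ_iff.mp (mem_range.mp hj)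
  simp only [add_tsub_cancel_right, Nat.sub_sub_self hi, Nat.sub_sub_self hj, inv_pow,
    pow_sub₀ _ hz hi, pow_sub₀ _ hw hj]
  ring

theorem tmono_mul_onT (n m : ℕ) (d : ℕ → ℕ → ℂ) (i j : ℕ) (θ φ : ℝ) :
    tmono i j θ φ * onT n m d θ φ
      = ∑ p ∈ range (n + 1) ×ˢ range (m + 1),
          d p.1 p.2 * tmono (i + p.1 : ℕ) (j + p.2 : ℕ) θ φ := by
  simp only [onT, evalP, sum_product, mul_sum, tmono_eq_zpow, zpow_natCast]
  refine sum_congr rfl fun s _ => sum_congr rfl fun t _ => ?_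
  ring

theorem onT_reflC (n m : ℕ) (c : ℕ → ℕ → ℂ) (θ φ : ℝ) :
    onT n m (reflC n m c) θ φ = tmono n m θ φ * star (onT n m c θ φ) := by
  rw [onT, evalP_reflC _ _ _ (exp_ne_zero _) (exp_ne_zero _), star_exp_ofReal_mul_I,
    star_exp_ofReal_mul_I, inv_inv, inv_inv, tmono_eq_zpow, zpow_natCast, zpow_natCast, onT]

theorem normSq_onT_reflC (n m : ℕ) (c : ℕ → ℕ → ℂ) (θ φ : ℝ) :
    normSq (onT n m (reflC n m c) θ φ) = normSq (onT n m c θ φ) := by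
  rw [onT_reflC, normSq_mul, star_def, normSq_conj, tmono_eq_zpow]
  simp [normSq_eq_norm_sq, norm_exp_ofReal_mul_I]

theorem integral_exp_mul_I_zpow (k : ℤ) :
    ∫ θ in (0 : ℝ)..2 * Real.pi, exp (θ * I) ^ k = if k = 0 then 2 * Real.pi else 0 := by
  split_ifs with hk
  · simp [hk]
  have hkI : (k : ℂ) * I ≠ 0 := mul_ne_zero (Int.cast_ne_zero.mpr hk) I_ne_zero
  simp_rw [← exp_int_mul, ← mul_assoc, mul_right_comm _ _ I]
  rw [integral_exp_mul_complex hkI]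
  push_cast
  rw [show (k : ℂ) * I * (2 * Real.pi) = k * (2 * Real.pi * I) by ring, exp_int_mul_two_pi_mul_I]
  simp

theorem integral_exp_mul_I_pow_succ_mul_eq_zero {f : ℂ → ℂ}
    (hf : DifferentiableOn ℂ f (Metric.closedBall 0 1)) (a : ℕ) :
    ∫ θ in (0 : ℝ)..2 * Real.pi, exp (θ * I) ^ (a + 1) * f (exp (θ * I)) = 0 := by
  have hcauchy : (∮ z in C(0, 1), z ^ a * f z) = 0 :=
    ((differentiableOn_pow a).mul hf |>.mono
      Metric.closure_ball_subset_closedBall).diffContOnCl.circleIntegral_eq_zero zero_le_one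
  simp only [circleIntegral, deriv_circleMap, circleMap_zero, ofReal_one, one_mul,
    smul_eq_mul] at hcauchy
  have hrearrange : ∀ θ : ℝ, exp (θ * I) * I * (exp (θ * I) ^ a * f (exp (θ * I)))
      = I * (exp (θ * I) ^ (a + 1) * f (exp (θ * I))) := fun θ => by ring
  simpa only [hrearrange, intervalIntegral.integral_const_mul, mul_eq_zero, I_ne_zero,
    false_or] using hcauchy

theorem intervalIntegral_intervalIntegral_swap_of_continuous {F : ℝ → ℝ → ℂ}
    (hF : Continuous (Function.uncurry F)) (a b c d : ℝ) :
    ∫ x in a..b, ∫ y in c..d, F x y = ∫ y in c..d, ∫ x in a..b, F x y :=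
  intervalIntegral_intervalIntegral_swap <|
    (hF.continuousOn.integrableOn_compact (isCompact_uIcc.prod isCompact_uIcc)).mono_set
      (Set.prod_mono Set.uIoc_subset_uIcc Set.uIoc_subset_uIcc)

theorem integral_integral_tmono (a b : ℤ) :
    ∫ θ in (0 : ℝ)..2 * Real.pi, ∫ φ in (0 : ℝ)..2 * Real.pi, tmono a b θ φ
      = if a = 0 ∧ b = 0 then (2 * Real.pi : ℂ) ^ 2 else 0 := by
  simp only [tmono_eq_zpow, intervalIntegral.integral_const_mul,
    intervalIntegral.integral_mul_const, integral_exp_mul_I_zpow]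
  split_ifs <;> simp_all [sq]

theorem integral_integral_tmono_div_onT_eq_zero {n m : ℕ} {c : ℕ → ℕ → ℂ} (hs : Stable n m c)
    {a b : ℤ} (hab : 1 ≤ a ∨ 1 ≤ b) :
    ∫ θ in (0 : ℝ)..2 * Real.pi, ∫ φ in (0 : ℝ)..2 * Real.pi, tmono a b θ φ / onT n m c θ φ
      = 0 := by
  have hsplit (θ φ : ℝ) : tmono a b θ φ / onT n m c θ φ
      = exp (θ * I) ^ a * exp (φ * I) ^ b * (evalP n m c (exp (θ * I)) (exp (φ * I)))⁻¹ := by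
    rw [tmono_eq_zpow, onT, div_eq_mul_inv]
  have hinv {g : ℂ → ℂ} (hg : Differentiable ℂ g) (hg0 : ∀ z, ‖z‖ ≤ 1 → g z ≠ 0) :
      DifferentiableOn ℂ (fun z => (g z)⁻¹) (Metric.closedBall 0 1) :=
    hg.differentiableOn.inv fun z hz => hg0 z (by simpa using hz)
  rcases hab with ha | hb
  · obtain ⟨a, rfl⟩ : ∃ a' : ℕ, a = (a' + 1 : ℕ) := ⟨(a - 1).toNat, by omega⟩
    have hinner (φ : ℝ) :
        ∫ θ in (0 : ℝ)..2 * Real.pi, tmono (a + 1 : ℕ) b θ φ / onT n m c θ φ = 0 := by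
      simp_rw [hsplit, zpow_natCast, mul_assoc]
      refine integral_exp_mul_I_pow_succ_mul_eq_zero
        (f := fun z => exp (φ * I) ^ b * (evalP n m c z (exp (φ * I)))⁻¹) ?_ a
      exact (differentiableOn_const _).mul <| hinv (differentiable_evalP_left n m c _) fun z hz =>
        hs _ _ hz (norm_exp_ofReal_mul_I φ).le
    rw [intervalIntegral_intervalIntegral_swap_of_continuous]
    · simp only [hinner, intervalIntegral.integral_zero]
    · exact (continuous_tmono _ _).div (continuous_onT n m c) fun x => onT_ne_zero hs x.1 x.2
  · obtain ⟨b, rfl⟩ : ∃ b' : ℕ, b = (b' + 1 : ℕ) := ⟨(b - 1).toNat, by omega⟩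
    have hinner (θ : ℝ) :
        ∫ φ in (0 : ℝ)..2 * Real.pi, tmono a (b + 1 : ℕ) θ φ / onT n m c θ φ = 0 := by
      simp_rw [hsplit, zpow_natCast, mul_assoc]
      rw [intervalIntegral.integral_const_mul, integral_exp_mul_I_pow_succ_mul_eq_zero <|
        hinv (differentiable_evalP_right n m c _) fun w hw =>
          hs _ _ (norm_exp_ofReal_mul_I θ).le hw, mul_zero]
    simp only [hinner, intervalIntegral.integral_zero]

section InnerProduct

variable {n m : ℕ} {c : ℕ → ℕ → ℂ}

theorem integral_muT (hs : Stable n m c) {h : ℝ × ℝ → ℂ} (hh : Continuous h) :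
    ∫ x, h x ∂muT n m c = (1 / (2 * Real.pi) ^ 2 : ℂ) *
      ∫ θ in (0 : ℝ)..2 * Real.pi, ∫ φ in (0 : ℝ)..2 * Real.pi,
        h (θ, φ) / (normSq (onT n m c θ φ) : ℂ) := by
  have hP : Continuous fun x : ℝ × ℝ => normSq (onT n m c x.1 x.2) :=
    continuous_normSq.comp (continuous_onT n m c)
  have hP0 (x : ℝ × ℝ) : normSq (onT n m c x.1 x.2) ≠ 0 :=
    normSq_eq_zero.not.mpr (onT_ne_zero hs x.1 x.2)
  have h2π : (0 : ℝ) ≤ 2 * Real.pi := by positivity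
  have hq : Continuous fun x : ℝ × ℝ => h x / (normSq (onT n m c x.1 x.2) : ℂ) :=
    hh.div (continuous_ofReal.comp hP) fun x => ofReal_ne_zero.mpr (hP0 x)
  have hd : Continuous fun x : ℝ × ℝ => 1 / ((2 * Real.pi) ^ 2 * normSq (onT n m c x.1 x.2)) :=
    continuous_const.div (continuous_const.mul hP) fun x =>
      mul_ne_zero (by positivity) (hP0 x)
  have hpt (x : ℝ × ℝ) :
      (ENNReal.ofReal (1 / ((2 * Real.pi) ^ 2 * normSq (onT n m c x.1 x.2)))).toReal • h x
        = (1 / (2 * Real.pi) ^ 2 : ℂ) * (h x / (normSq (onT n m c x.1 x.2) : ℂ)) := by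
    rw [ENNReal.toReal_ofReal (one_div_nonneg.mpr (mul_nonneg (by positivity) (normSq_nonneg _))),
      real_smul]
    push_cast
    ring
  rw [muT, integral_withDensity_eq_integral_toReal_smul
    hd.measurable.ennreal_ofReal (ae_of_all _ fun _ => ENNReal.ofReal_lt_top)]
  simp_rw [hpt]
  rw [integral_const_mul, Measure.volume_eq_prod, setIntegral_prod _
    (hq.continuousOn.integrableOn_compact (isCompact_Icc.prod isCompact_Icc)),
    integral_Icc_eq_integral_Ioc, ← intervalIntegral.integral_of_le h2π]
  simp_rw [integral_Icc_eq_integral_Ioc, ← intervalIntegral.integral_of_le h2π]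

/-- Mathlib's inner product is conjugate-linear in its first argument, `ip` in its second. -/
theorem inner_eq_ip (hs : Stable n m c) {f g : Lp ℂ 2 (muT n m c)} {F G : ℝ × ℝ → ℂ}
    (hF : Continuous F) (hG : Continuous G) (hf : ⇑f =ᵐ[muT n m c] F) (hg : ⇑g =ᵐ[muT n m c] G) :
    ⟪f, g⟫ = ip n m c (fun θ φ => G (θ, φ)) (fun θ φ => F (θ, φ)) := by
  have hfg : (fun x => ⟪f x, g x⟫) =ᵐ[muT n m c] fun x => G x * star (F x) := by
    filter_upwards [hf, hg] with x hfx hgx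
    rw [hfx, hgx, RCLike.inner_apply]
    rfl
  rw [L2.inner_def, integral_congr_ae hfg, integral_muT hs (h := fun x => G x * star (F x))
    (hG.mul (continuous_star.comp hF)), ip]

theorem ip_tmono_mul_reflC (hs : Stable n m c) (i j k l : ℕ) :
    ip n m c (fun θ φ => tmono i j θ φ * onT n m (reflC n m c) θ φ)
      (fun θ φ => tmono k l θ φ * onT n m (reflC n m c) θ φ) = if i = k ∧ j = l then 1 else 0 := by
  have hpt (θ φ : ℝ) : tmono i j θ φ * onT n m (reflC n m c) θ φ
      * star (tmono k l θ φ * onT n m (reflC n m c) θ φ) / (normSq (onT n m c θ φ) : ℂ)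
      = tmono (i - k) (j - l) θ φ := by
    have hP : (normSq (onT n m c θ φ) : ℂ) ≠ 0 :=
      ofReal_ne_zero.mpr (normSq_eq_zero.not.mpr (onT_ne_zero hs θ φ))
    rw [star_mul', star_tmono, mul_mul_mul_comm, tmono_mul_tmono, star_def, mul_conj,
      normSq_onT_reflC, mul_div_assoc, div_self hP, mul_one, ← sub_eq_add_neg, ← sub_eq_add_neg]
  simp only [ip, hpt, integral_integral_tmono, sub_eq_zero, Nat.cast_inj]
  split_ifs
  · field_simp
  · simp

theorem ip_tmono_mul_reflC_tmono (hs : Stable n m c) {i j k l : ℕ} (hkl : k < n ∨ l < m) :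
    ip n m c (fun θ φ => tmono i j θ φ * onT n m (reflC n m c) θ φ) (fun θ φ => tmono k l θ φ)
      = 0 := by
  have hpt (θ φ : ℝ) : tmono i j θ φ * onT n m (reflC n m c) θ φ * star (tmono k l θ φ)
      / (normSq (onT n m c θ φ) : ℂ) = tmono (i + n - k) (j + m - l) θ φ / onT n m c θ φ := by
    have hinv : star (onT n m c θ φ) / (normSq (onT n m c θ φ) : ℂ) = (onT n m c θ φ)⁻¹ := by
      rw [inv_def, div_eq_mul_inv, ofReal_inv]
      rfl
    calc _ = tmono i j θ φ * tmono n m θ φ * tmono (-k) (-l) θ φ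
          * (star (onT n m c θ φ) / (normSq (onT n m c θ φ) : ℂ)) := by
          rw [onT_reflC, star_tmono]
          ring
      _ = _ := by
          rw [tmono_mul_tmono, tmono_mul_tmono, hinv, ← sub_eq_add_neg, ← sub_eq_add_neg,
            div_eq_mul_inv]
  simp only [ip, hpt]
  rw [integral_integral_tmono_div_onT_eq_zero hs (by omega), mul_zero]

end InnerProduct

theorem statement15_general (n m : ℕ) (c : ℕ → ℕ → ℂ)
    (hstable : Stable n m c)
    (M : ℤ → ℤ → Lp ℂ 2 (muT n m c))
    (hM : ∀ i j : ℤ, (M i j : ℝ × ℝ → ℂ) =ᵐ[muT n m c] fun x => tmono i j x.1 x.2)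
    (b : ℕ → ℕ → Lp ℂ 2 (muT n m c))
    (hb : ∀ i j : ℕ, (b i j : ℝ × ℝ → ℂ) =ᵐ[muT n m c]
      fun x => tmono (i : ℤ) (j : ℤ) x.1 x.2 * onT n m (reflC n m c) x.1 x.2) :
    Orthonormal ℂ (fun q : ℕ × ℕ => b q.1 q.2)
    ∧ (Submodule.span ℂ (Set.range fun q : ℕ × ℕ => b q.1 q.2)).topologicalClosure
        = (Submodule.span ℂ
              {f | ∃ i j : ℕ, f = M (i : ℤ) (j : ℤ)}).topologicalClosure
          ⊓ ((Submodule.span ℂ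
              {f | ∃ i j : ℕ, (i < n ∨ j < m) ∧ f = M (i : ℤ) (j : ℤ)}).topologicalClosure)ᗮ := by
  have hcont (i j : ℕ) :
      Continuous fun x : ℝ × ℝ => tmono i j x.1 x.2 * onT n m (reflC n m c) x.1 x.2 :=
    (continuous_tmono _ _).mul (continuous_onT _ _ _)
  have hexpand (i j : ℕ) : b i j = ∑ p ∈ range (n + 1) ×ˢ range (m + 1),
      reflC n m c p.1 p.2 • M (i + p.1 : ℕ) (j + p.2 : ℕ) :=
    Lp.eq_sum_smul_of_ae_eq _ (fun _ => hM _ _)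
      ((hb i j).trans (ae_of_all _ fun x => tmono_mul_onT n m _ i j x.1 x.2))
  have hlead : reflC n m c n m ≠ 0 := by
    simpa [reflC, evalP_zero_zero] using hstable 0 0 (by simp) (by simp)
  refine ⟨orthonormal_iff_ite.mpr fun q r => ?_,
    Submodule.topologicalClosure_eq_inf_orthogonal_of_isOrtho ?_ ?_ ?_⟩
  · rw [(inner_eq_ip hstable (hcont _ _) (hcont _ _) (hb _ _) (hb _ _)).trans
      (ip_tmono_mul_reflC hstable _ _ _ _)]
    simp [Prod.ext_iff, eq_comm]
  · refine Submodule.span_le.mpr ?_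
    rintro _ ⟨⟨i, j⟩, rfl⟩
    dsimp only [SetLike.mem_coe]
    rw [hexpand]
    exact Submodule.sum_mem _ fun p _ => Submodule.smul_mem _ _ (Submodule.subset_span ⟨_, _, rfl⟩)
  · refine (Submodule.isOrtho_span.mpr ?_).symm
    rintro _ ⟨k, l, hkl, rfl⟩ _ ⟨q, rfl⟩
    exact (inner_eq_ip hstable (continuous_tmono _ _) (hcont _ _) (hM _ _) (hb _ _)).trans
      (ip_tmono_mul_reflC_tmono hstable hkl)
  · refine Submodule.span_le.mpr ?_
    rintro _ ⟨i, j, rfl⟩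
    exact Submodule.le_topologicalClosure _
      (mem_span_sup_span_of_triangular _ hlead (fun i j : ℕ => M i j) b hexpand i j)

/-- {z^i w^j p̃ : i,j ≥ 0} is an orthonormal basis of the orthogonal
complement of the closed span of {z^i w^j : i,j ≥ 0, (i,j) ≱ (n,m)} inside the closed
span of all monomials {z^i w^j : i,j ≥ 0}. -/
theorem statement15 (n m : ℕ) (c : ℕ → ℕ → ℂ)
    (hstable : Stable n m c) (hdeg : DegreeNM n m c)
    (M : ℤ → ℤ → Lp ℂ 2 (muT n m c))
    (hM : ∀ i j : ℤ, (M i j : ℝ × ℝ → ℂ) =ᵐ[muT n m c] fun x => tmono i j x.1 x.2)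
    (b : ℕ → ℕ → Lp ℂ 2 (muT n m c))
    (hb : ∀ i j : ℕ, (b i j : ℝ × ℝ → ℂ) =ᵐ[muT n m c]
      fun x => tmono (i : ℤ) (j : ℤ) x.1 x.2 * onT n m (reflC n m c) x.1 x.2) :
    Orthonormal ℂ (fun q : ℕ × ℕ => b q.1 q.2)
    ∧ (Submodule.span ℂ (Set.range fun q : ℕ × ℕ => b q.1 q.2)).topologicalClosure
        = (Submodule.span ℂ
              {f | ∃ i j : ℕ, f = M (i : ℤ) (j : ℤ)}).topologicalClosure
          ⊓ ((Submodule.span ℂ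
              {f | ∃ i j : ℕ, (i < n ∨ j < m) ∧ f = M (i : ℤ) (j : ℤ)}).topologicalClosure)ᗮ :=
  statement15_general n m c hstable M hM b hb
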